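/- (Mathematical content of Theorem 2.) Let E' be a set of edges of a finite simple graph with open vertex set O (the erasure on a surface code with boundaries), and let σ be a set of non-open vertices such that σ = ∂̊(B) for some B ⊆ E'. Then for every relative spanning forest F of E' there exists exactly one subset A ⊆ F with ∂̊(A) = σ. -/

import Mathlib

open scoped symmDiff

/-- The boundary of a set `A` of edges: the set of vertices belonging to an odd
number of edges of `A`. -/
def edgeBoundary {V : Type*} [Fintype V] [DecidableEq V] (A : Finset (Sym2 V)) : Finset V :=
  Finset.univ.filter fun v => Odd (A.filter (fun e => v ∈ e)).card

/-- The relative boundary with respect to a set `O` of open vertices: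
`∂̊(A) = ∂(A) \ O`. -/
def relBoundary {V : Type*} [Fintype V] [DecidableEq V] (O : Finset V)
    (A : Finset (Sym2 V)) : Finset V :=
  edgeBoundary A \ O

/-- `F` is a relative spanning forest of the edge set `E'` (with open vertices
`O`): a subset of `E'` containing no nonempty relative cycle, maximal with this
property among subsets of `E'`. -/
def IsRelSpanningForest {V : Type*} [Fintype V] [DecidableEq V] (O : Finset V)
    (E' F : Finset (Sym2 V)) : Prop :=
  F ⊆ E' ∧ (∀ γ ⊆ F, relBoundary O γ = ∅ → γ = ∅) ∧
    ∀ F', F ⊆ F' → F' ⊆ E' → (∀ γ ⊆ F', relBoundary O γ = ∅ → γ = ∅) → F' = F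

section Aux
variable {α : Type*} [DecidableEq α]

lemma filter_symmDiff' (s t : Finset α) (p : α → Prop) [DecidablePred p] :
    (s ∆ t).filter p = s.filter p ∆ t.filter p := by
  ext a; simp [Finset.mem_symmDiff, Finset.mem_filter]; tauto

lemma card_symmDiff_key (s t : Finset α) :
    s.card + t.card = (s ∆ t).card + 2 * (s ∩ t).card := by
  have h1 : (s ∆ t) ∪ (s ∩ t) = s ∪ t := by
    simpa [Finset.sup_eq_union, Finset.inf_eq_inter] using symmDiff_sup_inf (a := s) (b := t)
  have h2 : Disjoint (s ∆ t) (s ∩ t) := by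
    simpa [Finset.inf_eq_inter] using disjoint_symmDiff_inf (a := s) (b := t)
  have h3 := Finset.card_union_of_disjoint h2
  have h4 := Finset.card_union_add_card_inter s t
  rw [h1] at h3
  omega

lemma odd_card_symmDiff (s t : Finset α) :
    Odd ((s ∆ t).card) ↔ ¬(Odd s.card ↔ Odd t.card) := by
  have := card_symmDiff_key s t
  rw [Nat.odd_iff, Nat.odd_iff, Nat.odd_iff]
  omega

end Aux

section Bdy
variable {V : Type*} [Fintype V] [DecidableEq V]

lemma edgeBoundary_symmDiff (A B : Finset (Sym2 V)) :
    edgeBoundary (A ∆ B) = edgeBoundary A ∆ edgeBoundary B := by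
  ext v
  simp only [edgeBoundary, Finset.mem_symmDiff, Finset.mem_filter, Finset.mem_univ, true_and,
    filter_symmDiff', odd_card_symmDiff]
  tauto

lemma relBoundary_symmDiff (O : Finset V) (A B : Finset (Sym2 V)) :
    relBoundary O (A ∆ B) = relBoundary O A ∆ relBoundary O B := by
  simp only [relBoundary, edgeBoundary_symmDiff]
  ext v
  simp [Finset.mem_symmDiff, Finset.mem_sdiff]; tauto

end Bdy

/-- Theorem 2 (mathematical content): for an erasure `E'` on a surface code
with open vertices `O` and a syndrome `σ` of non-open vertices realizable
within the erasure, every relative spanning forest `F` of `E'` contains exactly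
one subset `A` with `∂̊(A) = σ`. -/
theorem exists_unique_error_in_rel_forest {V : Type*} [Fintype V] [DecidableEq V]
    (G : SimpleGraph V) (O : Finset V)
    (E' : Finset (Sym2 V)) (hE' : ↑E' ⊆ G.edgeSet)
    (σ : Finset V) (hσO : ∀ v ∈ σ, v ∉ O) (hσ : ∃ B ⊆ E', relBoundary O B = σ)
    (F : Finset (Sym2 V)) (hF : IsRelSpanningForest O E' F) :
    ∃! A : Finset (Sym2 V), A ⊆ F ∧ relBoundary O A = σ := by
  obtain ⟨hFE, hforest, hmax⟩ := hF
  -- Existence: from B ⊆ E' with relBoundary = σ, push into F by induction on (B \ F).card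
  have exist : ∀ n (B : Finset (Sym2 V)), (B \ F).card = n → B ⊆ E' →
      ∃ A ⊆ F, relBoundary O A = relBoundary O B := by
    intro n
    induction n using Nat.strong_induction_on with
    | _ n ih =>
      intro B hcard hBE
      by_cases hBF : B ⊆ F
      · exact ⟨B, hBF, rfl⟩
      · obtain ⟨e, heB, heF⟩ := Finset.not_subset.mp hBF
        -- F ∪ {e} violates maximality's hypothesis, so it has a nonempty relative cycle
        have hne : insert e F ≠ F := by
          intro h; exact heF (h ▸ Finset.mem_insert_self e F)
        have : ¬ ∀ γ ⊆ insert e F, relBoundary O γ = ∅ → γ = ∅ := by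
          intro h
          exact hne (hmax (insert e F) (Finset.subset_insert e F)
            (Finset.insert_subset (hBE heB) hFE) h)
        push_neg at this
        obtain ⟨γ, hγsub, hγbd, hγne⟩ := this
        have heγ : e ∈ γ := by
          by_contra he
          have : γ ⊆ F := fun x hx => (Finset.mem_insert.mp (hγsub hx)).resolve_left
            (fun h => he (h ▸ hx))
          exact hγne.ne_empty (hforest γ this hγbd)
        set B' := B ∆ γ with hB'
        have hbd' : relBoundary O B' = relBoundary O B := by
          rw [hB', relBoundary_symmDiff, hγbd]
          simp
        have hB'E : B' ⊆ E' := by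
          intro x hx
          rcases Finset.mem_symmDiff.mp hx with ⟨h1, _⟩ | ⟨h1, _⟩
          · exact hBE h1
          · rcases Finset.mem_insert.mp (hγsub h1) with h | h
            · exact h ▸ hBE heB
            · exact hFE h
        have hsub : B' \ F ⊆ (B \ F).erase e := by
          intro x hx
          obtain ⟨hx1, hx2⟩ := Finset.mem_sdiff.mp hx
          rcases Finset.mem_symmDiff.mp hx1 with ⟨h1, h2⟩ | ⟨h1, h2⟩
          · refine Finset.mem_erase.mpr ⟨fun h => h2 (h ▸ heγ), Finset.mem_sdiff.mpr ⟨h1, hx2⟩⟩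
          · exact absurd ((Finset.mem_insert.mp (hγsub h1)).resolve_left
              (fun h => h2 (h ▸ heB))) hx2
        have hlt : (B' \ F).card < n := by
          calc (B' \ F).card ≤ ((B \ F).erase e).card := Finset.card_le_card hsub
            _ < (B \ F).card := Finset.card_erase_lt_of_mem (Finset.mem_sdiff.mpr ⟨heB, heF⟩)
            _ = n := hcard
        obtain ⟨A, hAF, hA⟩ := ih _ hlt B' rfl hB'E
        exact ⟨A, hAF, hA.trans hbd'⟩
  obtain ⟨B, hBE, hB⟩ := hσ
  obtain ⟨A, hAF, hA⟩ := exist _ B rfl hBE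
  refine ⟨A, ⟨hAF, hA.trans hB⟩, ?_⟩
  rintro A' ⟨hA'F, hA'⟩
  have : relBoundary O (A' ∆ A) = ∅ := by
    rw [relBoundary_symmDiff, hA', hA.trans hB, symmDiff_self]
    rfl
  have := hforest (A' ∆ A) (fun x hx => by
    rcases Finset.mem_symmDiff.mp hx with ⟨h, _⟩ | ⟨h, _⟩
    · exact hA'F h
    · exact hAF h) this
  have := symmDiff_eq_bot.mp this
  exact this
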